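/- Let P be a set with a free action of a group G, K ≤ G a subgroup, and V a G-set fibered over P equivariantly. Then the map Π : V/K → (V/G) ×_{P/G} (P/K), sending [v_p]_K ↦ ([v_p]_G, [p]_K), is a bijection from V/K onto the fibered product of V/G with P/K over P/G. -/
import Mathlib


/-- The map `V/K → V/G` (or `P/K → P/G`) induced by enlarging the acting
group from a subgroup `K ≤ G` to `G`. -/
def orbitEnlargeMap {G V : Type*} [Group G] [MulAction G V] (K : Subgroup G) :
    Quotient (MulAction.orbitRel K V) → Quotient (MulAction.orbitRel G V) :=
  Quotient.lift (fun v => Quotient.mk (MulAction.orbitRel G V) v) (by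
    intro a b h
    obtain ⟨k, hk⟩ := h
    exact Quotient.sound ⟨(k : G), hk⟩)

/-- The map `V/G → P/G` induced on orbit spaces by a `G`-equivariant
projection `π : V → P`. -/
def orbitQuotMap' {G P V : Type*} [Group G] [MulAction G P] [MulAction G V]
    (π : V → P) (hequiv : ∀ (g : G) (v : V), π (g • v) = g • π v) :
    Quotient (MulAction.orbitRel G V) → Quotient (MulAction.orbitRel G P) :=
  Quotient.lift (fun v => Quotient.mk (MulAction.orbitRel G P) (π v)) (by
    intro a b h
    obtain ⟨g, hg⟩ := h
    exact Quotient.sound ⟨g, by rw [← hg, hequiv]⟩)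

/-- Let `P` be a set with a free `G`-action, `K ≤ G` a subgroup,
and `V` a `G`-set fibered `G`-equivariantly over `P`. The map
`Π : V/K → (V/G) ×_{P/G} (P/K)`, `[v]_K ↦ ([v]_G, [π v]_K)`, is a bijection
onto the fibered product of `V/G` and `P/K` over `P/G`. -/
theorem subgroup_quotient_fibered_product_bijective {G P V : Type*} [Group G]
    [MulAction G P] [MulAction G V] (K : Subgroup G) (π : V → P)
    (hequiv : ∀ (g : G) (v : V), π (g • v) = g • π v)
    (hfree : ∀ (g : G) (p : P), g • p = p → g = 1) :
    Function.Bijective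
      ((Quotient.lift (fun v : V =>
        (⟨(Quotient.mk (MulAction.orbitRel G V) v,
            Quotient.mk (MulAction.orbitRel K P) (π v)), rfl⟩ :
          {x : Quotient (MulAction.orbitRel G V) × Quotient (MulAction.orbitRel K P) //
            orbitQuotMap' π hequiv x.1 = orbitEnlargeMap K x.2}))
        (by
          intro a b h
          obtain ⟨k, hk⟩ := h
          refine Subtype.ext (Prod.ext ?_ ?_)
          · exact Quotient.sound ⟨(k : G), hk⟩
          · refine Quotient.sound ⟨k, ?_⟩
            show (k : G) • π b = π a
            rw [← hequiv, ← hk]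
            rfl)) :
        Quotient (MulAction.orbitRel K V) →
          {x : Quotient (MulAction.orbitRel G V) × Quotient (MulAction.orbitRel K P) //
            orbitQuotMap' π hequiv x.1 = orbitEnlargeMap K x.2}) := by
  constructor
  · intro a b hab
    induction a using Quotient.inductionOn with | h v =>
    induction b using Quotient.inductionOn with | h w =>
    have h1 := congrArg (fun x => x.val.1) hab
    have h2 := congrArg (fun x => x.val.2) hab
    obtain ⟨g, hg'⟩ := Quotient.exact h1
    obtain ⟨k, hk'⟩ := Quotient.exact h2
    have hg : g • w = v := hg'
    have hk : (k : G) • π w = π v := hk'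
    have : (g : G) • π w = (k : G) • π w := by
      rw [← hequiv, hg]; exact hk.symm
    have hgk : (k : G)⁻¹ * g = 1 := hfree _ (π w) (by
      rw [mul_smul, this, ← mul_smul, inv_mul_cancel, one_smul])
    have : g = (k : G) := by
      have h3 := congrArg (fun x => (k : G) * x) hgk
      simpa [← mul_assoc] using h3
    refine Quotient.sound ⟨k, ?_⟩
    show (k : G) • w = v
    rw [← this]; exact hg
  · rintro ⟨⟨qv, qp⟩, hq⟩
    induction qv using Quotient.inductionOn with | h v =>
    induction qp using Quotient.inductionOn with | h p =>
    obtain ⟨g, hg⟩ := Quotient.exact hq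
    -- hg : g • p = π v
    refine ⟨Quotient.mk _ (g⁻¹ • v), ?_⟩
    refine Subtype.ext (Prod.ext ?_ ?_)
    · exact Quotient.sound ⟨g⁻¹, rfl⟩
    · show Quotient.mk _ (π (g⁻¹ • v)) = Quotient.mk (MulAction.orbitRel K P) p
      rw [hequiv, ← hg, ← mul_smul, inv_mul_cancel, one_smul]
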